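/- Let R be a p×p correlation matrix with entries r_{ij} = τ_i τ_j Θ_{ij} where Θ = Σ⁻¹ for a positive definite Σ and τ_i = Θ_{ii}^{-1/2}. Then (1/p)(Σ_{i,j} r_{ij}²)^{1/2} ≤ c/√p where c = λ_max(Σ)/λ_min(Σ). Hence if c(p)/√p → 0 then (1/p)(Σ_{i,j} r_{ij}²)^{1/2} → 0. -/

import Mathlib

/-!
Write `Σ = U D Uᵀ` with `U` orthogonal and `D` the diagonal of eigenvalues in `[λ_min, λ_max]`.
Then `Θ = Σ⁻¹ = U D⁻¹ Uᵀ`, so every diagonal entry `Θᵢᵢ = ∑ₖ Uᵢₖ² / dₖ` is a convex combination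
of the `1 / dₖ` and hence at least `1 / λ_max`, while `∑ᵢⱼ Θᵢⱼ² = ∑ₖ dₖ⁻² ≤ p / λ_min²` by
orthogonal invariance of the Frobenius norm. Dividing by `Θᵢᵢ Θⱼⱼ ≥ λ_max⁻²` gives
`∑ᵢⱼ rᵢⱼ² ≤ p c²`, which is the bound; the limit follows by squeezing.
-/

open Matrix Filter Unitary

namespace Matrix

variable {n : Type*}

noncomputable def correlation (Θ : Matrix n n ℝ) : Matrix n n ℝ :=
  of fun i j => √(1 / Θ i i) * √(1 / Θ j j) * Θ i j

lemma correlation_apply_sq (Θ : Matrix n n ℝ) {i j : n} (hi : 0 ≤ Θ i i) (hj : 0 ≤ Θ j j) :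
    correlation Θ i j ^ 2 = Θ i j ^ 2 / (Θ i i * Θ j j) := by
  rw [correlation, of_apply, mul_pow, mul_pow, Real.sq_sqrt (by positivity),
    Real.sq_sqrt (by positivity)]
  field_simp

variable [Fintype n]

lemma sum_sq_correlation_le (Θ : Matrix n n ℝ) {M : ℝ} (hM : 0 < M)
    (hΘ : ∀ i, M⁻¹ ≤ Θ i i) :
    ∑ i, ∑ j, correlation Θ i j ^ 2 ≤ M ^ 2 * ∑ i, ∑ j, Θ i j ^ 2 := by
  have hpos : ∀ i, 0 < Θ i i := fun i => (inv_pos.2 hM).trans_le (hΘ i)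
  simp only [Finset.mul_sum]
  refine Finset.sum_le_sum fun i _ => Finset.sum_le_sum fun j _ => ?_
  rw [correlation_apply_sq Θ (hpos i).le (hpos j).le]
  calc Θ i j ^ 2 / (Θ i i * Θ j j) ≤ Θ i j ^ 2 / (M⁻¹ * M⁻¹) :=
        div_le_div_of_nonneg_left (sq_nonneg _) (by positivity)
          (mul_le_mul (hΘ i) (hΘ j) (by positivity) (hpos i).le)
    _ = M ^ 2 * Θ i j ^ 2 := by field_simp

lemma sum_sq_apply_eq_trace_mul_transpose (A : Matrix n n ℝ) :
    ∑ i, ∑ j, A i j ^ 2 = trace (A * Aᵀ) := by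
  simp [trace, mul_apply, sq]

variable [DecidableEq n]

section Orthogonal

variable (U : unitaryGroup n ℝ)

lemma unitaryGroup_sum_sq_row (i : n) : ∑ k, (U : Matrix n n ℝ) i k ^ 2 = 1 := by
  simpa [mul_apply, sq] using congrFun₂ (mem_unitaryGroup_iff.mp U.2) i i

lemma conjStarAlgAut_diagonal_apply (d : n → ℝ) (i j : n) :
    conjStarAlgAut ℝ _ U (diagonal d) i j = ∑ k, d k * (U i k * U j k) := by
  rw [conjStarAlgAut_apply, mul_apply]
  simp only [mul_diagonal, star_apply, star_trivial]
  exact Finset.sum_congr rfl fun k _ => by ring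

lemma sum_sq_conjStarAlgAut_diagonal_apply (d : n → ℝ) :
    ∑ i, ∑ j, conjStarAlgAut ℝ _ U (diagonal d) i j ^ 2 = ∑ k, d k ^ 2 := by
  rw [sum_sq_apply_eq_trace_mul_transpose, ← conjTranspose_eq_transpose_of_trivial,
    ← star_eq_conjTranspose, ← map_star, ← map_mul, conjStarAlgAut_apply, trace_mul_cycle,
    Unitary.coe_star_mul_self, one_mul]
  simp [star_eq_conjTranspose, trace_diagonal, sq]

end Orthogonal

variable {A : Matrix n n ℝ}

lemma PosDef.inv_eq_conjStarAlgAut (hA : A.PosDef) :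
    A⁻¹ = conjStarAlgAut ℝ _ hA.1.eigenvectorUnitary (diagonal hA.1.eigenvalues⁻¹) := by
  rw [nonsing_inv_eq_ringInverse, ← cfc_ringInverse_id (R := ℝ) A hA.isUnit hA.1.isSelfAdjoint,
    hA.1.cfc_eq, IsHermitian.cfc, RCLike.ofReal_real_eq_id]
  rfl

lemma PosDef.inv_le_inv_apply_self (hA : A.PosDef) {M : ℝ} (hM : ∀ k, hA.1.eigenvalues k ≤ M)
    (i : n) : M⁻¹ ≤ A⁻¹ i i := by
  set U := hA.1.eigenvectorUnitary
  rw [hA.inv_eq_conjStarAlgAut, conjStarAlgAut_diagonal_apply]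
  calc M⁻¹ = ∑ k, M⁻¹ * (U i k * U i k) := by
        simp only [← Finset.mul_sum, ← sq, unitaryGroup_sum_sq_row, mul_one]
    _ ≤ ∑ k, hA.1.eigenvalues⁻¹ k * (U i k * U i k) :=
        Finset.sum_le_sum fun k _ => mul_le_mul_of_nonneg_right
          (inv_anti₀ (hA.eigenvalues_pos k) (hM k)) (mul_self_nonneg _)

lemma PosDef.sum_sq_inv_apply (hA : A.PosDef) :
    ∑ i, ∑ j, A⁻¹ i j ^ 2 = ∑ k, (hA.1.eigenvalues k)⁻¹ ^ 2 := by
  rw [hA.inv_eq_conjStarAlgAut, sum_sq_conjStarAlgAut_diagonal_apply]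
  rfl

theorem PosDef.sum_sq_correlation_inv_le [Nonempty n] (hA : A.PosDef) {μ M : ℝ}
    (hμ : 0 < μ) (hμA : ∀ k, μ ≤ hA.1.eigenvalues k) (hAM : ∀ k, hA.1.eigenvalues k ≤ M) :
    ∑ i, ∑ j, correlation A⁻¹ i j ^ 2 ≤ Fintype.card n * (M / μ) ^ 2 := by
  have hM : 0 < M := hμ.trans_le ((hμA (Classical.arbitrary n)).trans (hAM _))
  calc ∑ i, ∑ j, correlation A⁻¹ i j ^ 2 ≤ M ^ 2 * ∑ k, (hA.1.eigenvalues k)⁻¹ ^ 2 := by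
        rw [← hA.sum_sq_inv_apply]
        exact sum_sq_correlation_le _ hM (hA.inv_le_inv_apply_self hAM)
    _ ≤ M ^ 2 * ∑ _k : n, μ⁻¹ ^ 2 := by
        gcongr with k
        · exact (inv_pos.2 (hA.eigenvalues_pos k)).le
        · exact hμA k
    _ = Fintype.card n * (M / μ) ^ 2 := by
        rw [Finset.sum_const, Finset.card_univ, nsmul_eq_mul]
        ring

end Matrix

lemma one_div_mul_sqrt_le_div_sqrt {N s c : ℝ} (hN : 0 < N) (hc : 0 ≤ c)
    (hs : s ≤ N * c ^ 2) :
    1 / N * √s ≤ c / √N := by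
  have hsqrt : √s ≤ √N * c := by
    simpa [Real.sqrt_mul hN.le, Real.sqrt_sq hc] using Real.sqrt_le_sqrt hs
  calc 1 / N * √s ≤ 1 / N * (√N * c) := by gcongr
    _ = c / √N := by
      have := Real.sq_sqrt hN.le
      field_simp
      rw [this]

/-- For the correlation matrix `R` with entries `r_{ij} = τ_i τ_j Θ_{ij}`
(`Θ = Σ⁻¹`, `τ_i = Θ_{ii}^{-1/2}`), one has `(1/p)(∑_{i,j} r_{ij}²)^{1/2} ≤ c/√p`
with `c = λ_max(Σ)/λ_min(Σ)`; hence if `c(p)/√p → 0` then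
`(1/p)(∑_{i,j} r_{ij}²)^{1/2} → 0`. (Here dimension is `p + 1`.) -/
theorem stmt11 (S : ∀ p : ℕ, Matrix (Fin (p + 1)) (Fin (p + 1)) ℝ)
    (hpd : ∀ p, (S p).PosDef)
    (lammax lammin : ℕ → ℝ)
    (hmax : ∀ p, lammax p = Finset.univ.sup' Finset.univ_nonempty (hpd p).1.eigenvalues)
    (hmin : ∀ p, lammin p = Finset.univ.inf' Finset.univ_nonempty (hpd p).1.eigenvalues)
    (c : ℕ → ℝ) (hc : ∀ p, c p = lammax p / lammin p)
    (r : ∀ p : ℕ, Matrix (Fin (p + 1)) (Fin (p + 1)) ℝ)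
    (hr : ∀ p i j, r p i j =
      Real.sqrt (1 / ((S p)⁻¹ i i)) * Real.sqrt (1 / ((S p)⁻¹ j j)) * (S p)⁻¹ i j) :
    (∀ p : ℕ, (1 / ((p : ℝ) + 1)) * Real.sqrt (∑ i, ∑ j, (r p i j) ^ 2) ≤
      c p / Real.sqrt ((p : ℝ) + 1)) ∧
    (Tendsto (fun p : ℕ => c p / Real.sqrt ((p : ℝ) + 1)) atTop (nhds 0) →
      Tendsto (fun p : ℕ => (1 / ((p : ℝ) + 1)) * Real.sqrt (∑ i, ∑ j, (r p i j) ^ 2))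
        atTop (nhds 0)) := by
  have bound (p : ℕ) : (1 / ((p : ℝ) + 1)) * Real.sqrt (∑ i, ∑ j, (r p i j) ^ 2) ≤
      c p / Real.sqrt ((p : ℝ) + 1) := by
    have hμA (k) : lammin p ≤ (hpd p).1.eigenvalues k :=
      hmin p ▸ Finset.inf'_le _ (Finset.mem_univ k)
    have hAM (k) : (hpd p).1.eigenvalues k ≤ lammax p :=
      hmax p ▸ Finset.le_sup' _ (Finset.mem_univ k)
    have hμ : 0 < lammin p :=
      hmin p ▸ (Finset.lt_inf'_iff _).2 fun k _ => (hpd p).eigenvalues_pos k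
    have hr' : r p = correlation (S p)⁻¹ := funext₂ (hr p)
    have hsum := (hpd p).sum_sq_correlation_inv_le hμ hμA hAM
    rw [Fintype.card_fin, Nat.cast_add_one, ← hc] at hsum
    refine one_div_mul_sqrt_le_div_sqrt (by positivity) ?_ (hr' ▸ hsum)
    rw [hc]
    exact div_nonneg (hμ.trans_le ((hμA 0).trans (hAM 0))).le hμ.le
  exact ⟨bound, fun h => squeeze_zero (fun p => by positivity) bound h⟩
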